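/- arXiv:2010.06687 — 8 statements merged into one kernel-verified Lean document; each statement's English description precedes it below -/
import Mathlib

section
/- Let a ≥ 1 and c > 0 be real numbers, let p > 2 be an odd integer, let d ≥ 1 be an integer, and let x, y be nonnegative integers. If p·c < 2·a + p, x + a·y ≤ p·c·d, and x + y ≥ (p+3)·d − 1, then: (1) y < 2·d; (2) a > (x − p·d)/(2·d − y); and (3) (x − p·d)/(2·d − y) ≥ (3·d − 1 − y)/(2·d − y). -/
/-- Arithmetic content of the key lemma on `Λ ≤ e_{p,2}^d`: if `p·c < 2·a + p`,
`x + a·y ≤ p·c·d` and `x + y ≥ (p+3)·d − 1`, then `y < 2d`,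
`a > (x − pd)/(2d − y)` and `(x − pd)/(2d − y) ≥ (3d − 1 − y)/(2d − y)`. -/
theorem key_lemma (a c : ℝ) (ha : 1 ≤ a) (hc : 0 < c) (p d : ℤ)
    (hp : 2 < p) (hodd : Odd p) (hd : 1 ≤ d)
    (x y : ℤ) (hx : 0 ≤ x) (hy : 0 ≤ y)
    (hne : (p : ℝ) * c < 2 * a + p)
    (haction : (x : ℝ) + a * y ≤ p * c * d)
    (hgenus : x + y ≥ (p + 3) * d - 1) :
    y < 2 * d ∧
    a > ((x : ℝ) - p * d) / (2 * d - y) ∧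
    ((x : ℝ) - p * d) / (2 * d - y) ≥ (3 * d - 1 - y) / (2 * d - y) := by
  have hdR : (1:ℝ) ≤ d := by exact_mod_cast hd
  have hgR : (x:ℝ) + y ≥ ((p:ℝ) + 3) * d - 1 := by exact_mod_cast hgenus
  have hyR : (0:ℝ) ≤ y := by exact_mod_cast hy
  have hkey : (x:ℝ) + a * y < 2 * a * d + p * d := by nlinarith
  have hy2 : y < 2 * d := by
    by_contra h
    push_neg at h
    have h' : (2:ℝ) * d ≤ y := by exact_mod_cast h
    nlinarith [mul_nonneg (sub_nonneg.mpr ha) (sub_nonneg.mpr h')]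
  have hpos : (0:ℝ) < 2 * d - y := by
    have : (y:ℝ) < 2 * d := by exact_mod_cast hy2
    linarith
  refine ⟨hy2, ?_, ?_⟩
  · rw [gt_iff_lt, div_lt_iff₀ hpos]; nlinarith
  · rw [ge_iff_le, div_le_div_iff₀ hpos hpos]; nlinarith
end

section
/- Let d₀ ≥ 2 be an integer, let a, c be real numbers with 1 ≤ a ≤ (2·d₀ − 1)/d₀ and c > 0, and let p > 2 be an odd integer with p·c < 2·a + p. Let d be an integer with 2 ≤ d ≤ d₀, and let x, y be nonnegative integers with x + a·y ≤ p·c·d and x + y ≥ (p+3)·d − 1. Then y ≤ d; moreover, if d = d₀ then y ≤ d₀ − 1. -/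
/-- Arithmetic content of Claim 1 in the elimination of the trivial factorization:
under the given hypotheses, `y ≤ d`, and moreover `y ≤ d₀ − 1` when `d = d₀`. -/
theorem claim_one (d₀ : ℤ) (hd₀ : 2 ≤ d₀) (a c : ℝ)
    (ha₁ : 1 ≤ a) (ha₂ : a ≤ (2 * d₀ - 1) / d₀) (hc : 0 < c)
    (p : ℤ) (hp : 2 < p) (hodd : Odd p)
    (hne : (p : ℝ) * c < 2 * a + p)
    (d : ℤ) (hd₁ : 2 ≤ d) (hd₂ : d ≤ d₀)
    (x y : ℤ) (hx : 0 ≤ x) (hy : 0 ≤ y)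
    (haction : (x : ℝ) + a * y ≤ p * c * d)
    (hgenus : x + y ≥ (p + 3) * d - 1) :
    y ≤ d ∧ (d = d₀ → y ≤ d₀ - 1) := by
  have hd₀R : (2:ℝ) ≤ (d₀:ℝ) := by exact_mod_cast hd₀
  have hd₀pos : (0:ℝ) < (d₀:ℝ) := by linarith
  have ha₂' : a * d₀ ≤ 2 * d₀ - 1 := by
    calc a * d₀ ≤ ((2 * d₀ - 1) / d₀) * d₀ := by
          exact mul_le_mul_of_nonneg_right ha₂ (le_of_lt hd₀pos)
      _ = 2 * d₀ - 1 := by field_simp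
  have hdR : (2:ℝ) ≤ (d:ℝ) := by exact_mod_cast hd₁
  have hdd₀ : (d:ℝ) ≤ (d₀:ℝ) := by exact_mod_cast hd₂
  have hgenusR : (x:ℝ) + y ≥ ((p:ℝ) + 3) * d - 1 := by exact_mod_cast hgenus
  have hpcd : (p:ℝ) * c * d < (2 * a + p) * d := by
    apply mul_lt_mul_of_pos_right hne; linarith
  -- key: (a-1)*y < (2a-3)*d + 1
  have hkey : (a - 1) * y < (2 * a - 3) * (d:ℝ) + 1 := by nlinarith
  have ha2 : a < 2 := by nlinarith
  constructor
  · by_contra h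
    push_neg at h
    have hyR : (d:ℝ) + 1 ≤ (y:ℝ) := by exact_mod_cast h
    nlinarith [mul_nonneg (by linarith : (0:ℝ) ≤ a - 1) (by linarith : (0:ℝ) ≤ (y:ℝ) - (d + 1)),
       mul_pos (by linarith : (0:ℝ) < 2 - a) (by linarith : (0:ℝ) < (d:ℝ) - 1)]
  · intro hde
    subst hde
    by_contra h
    push_neg at h
    have h' : d ≤ y := by omega
    have hyR : (d:ℝ) ≤ (y:ℝ) := by exact_mod_cast h'
    nlinarith [mul_nonneg (by linarith : (0:ℝ) ≤ a - 1) (by linarith : (0:ℝ) ≤ (y:ℝ) - d)]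
end

section
/- Let d₀ ≥ 2 be an integer, let a, c be real numbers with 1 ≤ a ≤ (2·d₀ − 1)/d₀ and c > 0, and let p be an odd integer with p ≥ 4·d₀ + 1 and p·c < 2·a + p. Let d be an integer with 2 ≤ d ≤ d₀, and let x, y be nonnegative integers with x + a·y ≤ p·c·d and 2·p·d² + (p+3)·d ≤ 2·(x·y + x + y). Then y ≥ d. -/
/-- Arithmetic content of Claim 2 in the elimination of the trivial factorization:
under the given hypotheses, `y ≥ d`. -/
theorem claim_two (d₀ : ℤ) (hd₀ : 2 ≤ d₀) (a c : ℝ)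
    (ha₁ : 1 ≤ a) (ha₂ : a ≤ (2 * d₀ - 1) / d₀) (hc : 0 < c)
    (p : ℤ) (hodd : Odd p) (hp : 4 * d₀ + 1 ≤ p)
    (hne : (p : ℝ) * c < 2 * a + p)
    (d : ℤ) (hd₁ : 2 ≤ d) (hd₂ : d ≤ d₀)
    (x y : ℤ) (hx : 0 ≤ x) (hy : 0 ≤ y)
    (haction : (x : ℝ) + a * y ≤ p * c * d)
    (hindex : 2 * p * d ^ 2 + (p + 3) * d ≤ 2 * (x * y + x + y)) :
    y ≥ d := by
  by_contra hcon
  push_neg at hcon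
  have hyd : (y : ℝ) + 1 ≤ d := by exact_mod_cast hcon
  have hdR : (2 : ℝ) ≤ d := by exact_mod_cast hd₁
  have hdd : (d : ℝ) ≤ d₀ := by exact_mod_cast hd₂
  have hd0R : (2 : ℝ) ≤ d₀ := by exact_mod_cast hd₀
  have hpR : 4 * (d₀ : ℝ) + 1 ≤ p := by exact_mod_cast hp
  have hxR : (0 : ℝ) ≤ x := by exact_mod_cast hx
  have hyR : (0 : ℝ) ≤ y := by exact_mod_cast hy
  have ha2 : a * d₀ ≤ 2 * d₀ - 1 := by
    have h0 : (0 : ℝ) < d₀ := by linarith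
    calc a * d₀ ≤ (2 * d₀ - 1) / d₀ * d₀ := by
          exact mul_le_mul_of_nonneg_right ha₂ (le_of_lt h0)
      _ = 2 * d₀ - 1 := by field_simp
  have hA : (x : ℝ) + a * y < (2 * a + p) * d := by
    have : (p : ℝ) * c * d < (2 * a + p) * d := by
      apply mul_lt_mul_of_pos_right hne; linarith
    linarith
  have hIR : 2 * (p : ℝ) * d ^ 2 + (p + 3) * d ≤ 2 * ((x : ℝ) * y + x + y) := by
    exact_mod_cast hindex
  have hP1 : 0 < ((2 * a + p) * d - (x + a * y)) * ((y : ℝ) + 1) := by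
    apply mul_pos (by linarith) (by linarith)
  have hP2 : 0 ≤ ((d : ℝ) - 1 - y) * (a * ((d : ℝ) - y) + p * d + 1) := by
    apply mul_nonneg (by linarith)
    have h1 : 0 ≤ a * ((d : ℝ) - y) := mul_nonneg (by linarith) (by linarith)
    nlinarith
  have hP3 : 0 ≤ ((d₀ : ℝ) - d) * (a - 1) := mul_nonneg (by linarith) (by linarith)
  have hP4 : 0 ≤ (2 * (d₀ : ℝ) - 1 - a * d₀) * d := mul_nonneg (by linarith) (by linarith)
  have hP5 : 0 ≤ ((d₀ : ℝ) - d) * (d - 2) := mul_nonneg (by linarith) (by linarith)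
  nlinarith [hP1, hP2, hP3, hP4, hP5, mul_pos (show (0:ℝ) < d by linarith) (show (0:ℝ) < d by linarith)]
end

section
/- Let d₀ ≥ 2 be an integer, let a, c be real numbers with 1 ≤ a ≤ (2·d₀ − 1)/d₀ and c > 0, and let p be an odd integer with p ≥ 4·d₀ + 1 and p·c < 2·a + p. Then there exist no nonnegative integers x, y satisfying simultaneously: x + a·y ≤ p·c·d₀, x + y ≥ (p+3)·d₀ − 1, and 2·p·d₀² + (p+3)·d₀ ≤ 2·(x·y + x + y). -/
/-- Arithmetic content of part (i) of the proposition eliminating the trivial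
factorization: no nonnegative integers `x, y` satisfy the action inequality, the genus
inequality, and the index bound simultaneously. -/
theorem no_trivial_factorization (d₀ : ℤ) (hd₀ : 2 ≤ d₀) (a c : ℝ)
    (ha₁ : 1 ≤ a) (ha₂ : a ≤ (2 * d₀ - 1) / d₀) (hc : 0 < c)
    (p : ℤ) (hodd : Odd p) (hp : 4 * d₀ + 1 ≤ p)
    (hne : (p : ℝ) * c < 2 * a + p) :
    ¬ ∃ x y : ℤ, 0 ≤ x ∧ 0 ≤ y ∧
      (x : ℝ) + a * y ≤ p * c * d₀ ∧
      x + y ≥ (p + 3) * d₀ - 1 ∧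
      2 * p * d₀ ^ 2 + (p + 3) * d₀ ≤ 2 * (x * y + x + y) := by
  rintro ⟨x, y, hx, hy, h1, h2, h3⟩
  have hdR : (2 : ℝ) ≤ (d₀ : ℝ) := by exact_mod_cast hd₀
  have hd0 : (0 : ℝ) < (d₀ : ℝ) := by linarith
  have hpR : 4 * (d₀ : ℝ) + 1 ≤ (p : ℝ) := by exact_mod_cast hp
  have hxR : (0 : ℝ) ≤ (x : ℝ) := by exact_mod_cast hx
  have hyR : (0 : ℝ) ≤ (y : ℝ) := by exact_mod_cast hy
  have h2R : (x : ℝ) + y ≥ ((p : ℝ) + 3) * d₀ - 1 := by exact_mod_cast h2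
  have h3R : 2 * (p : ℝ) * (d₀ : ℝ) ^ 2 + ((p : ℝ) + 3) * d₀ ≤
      2 * ((x : ℝ) * y + x + y) := by exact_mod_cast h3
  -- a·d₀ ≤ 2d₀ − 1
  have haR : a * d₀ ≤ 2 * (d₀ : ℝ) - 1 := by
    have := (le_div_iff₀ hd0).mp ha₂
    linarith
  -- action bound: p·c·d₀ < (2a+p)·d₀
  have hpc : (p : ℝ) * c * d₀ < (2 * a + p) * d₀ :=
    mul_lt_mul_of_pos_right hne hd0
  -- Step A : y ≤ d₀ − 1
  have hyd : (y : ℝ) ≤ (d₀ : ℝ) - 1 := by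
    by_contra h
    push_neg at h
    have h' : (d₀ : ℤ) - 1 < y := by exact_mod_cast h
    have h'' : (d₀ : ℝ) ≤ (y : ℝ) := by exact_mod_cast (by omega : d₀ ≤ y)
    have hprod : (a - 1) * (d₀ : ℝ) ≤ (a - 1) * y :=
      mul_le_mul_of_nonneg_left h'' (by linarith)
    nlinarith
  -- Step B : bound (x+1)(y+1)
  have key1 : ((x : ℝ) + 1) * ((y : ℝ) + 1) ≤
      ((2 * a + p) * d₀ - a * y + 1) * ((y : ℝ) + 1) := by
    apply mul_le_mul_of_nonneg_right _ (by linarith)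
    linarith
  have ht : (0 : ℝ) ≤ (d₀ : ℝ) - 1 - y := by linarith
  have key2 : ((2 * a + p) * d₀ - a * y + 1) * ((y : ℝ) + 1) ≤
      ((a + p) * d₀ + a + 1) * d₀ := by
    nlinarith [mul_nonneg ht (show (0 : ℝ) ≤ (p : ℝ) * d₀ + a + 1 by nlinarith),
      mul_nonneg (mul_nonneg (show (0 : ℝ) ≤ a by linarith) ht) ht]
  -- final contradiction
  nlinarith [mul_le_mul_of_nonneg_right haR (le_of_lt hd0),
    mul_le_mul_of_nonneg_right hpR (le_of_lt hd0)]
end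

section
/- Let d₀ ≥ 2 be an integer, let a, c be real numbers with 1 ≤ a ≤ (2·d₀ − 1)/d₀ and c > 0, and let p be an odd integer with p ≥ 4·d₀ + 1 and p·c < 2·a + p. Let d be an integer with 2 ≤ d ≤ d₀ − 1, and let x, y be nonnegative integers satisfying x + a·y ≤ p·c·d, x + y ≥ (p+3)·d − 1, and 2·p·d² + (p+3)·d ≤ 2·(x·y + x + y). Then y = d. -/
/-- Arithmetic content of part (ii) of the proposition eliminating the trivial
factorization: for `2 ≤ d ≤ d₀ − 1`, the action inequality, genus inequality, and index
bound force `y = d`. -/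
theorem middle_degree_y_eq_d (d₀ : ℤ) (hd₀ : 2 ≤ d₀) (a c : ℝ)
    (ha₁ : 1 ≤ a) (ha₂ : a ≤ (2 * d₀ - 1) / d₀) (hc : 0 < c)
    (p : ℤ) (hodd : Odd p) (hp : 4 * d₀ + 1 ≤ p)
    (hne : (p : ℝ) * c < 2 * a + p)
    (d : ℤ) (hd₁ : 2 ≤ d) (hd₂ : d ≤ d₀ - 1)
    (x y : ℤ) (hx : 0 ≤ x) (hy : 0 ≤ y)
    (haction : (x : ℝ) + a * y ≤ p * c * d)
    (hgenus : x + y ≥ (p + 3) * d - 1)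
    (hindex : 2 * p * d ^ 2 + (p + 3) * d ≤ 2 * (x * y + x + y)) :
    y = d := by
  have hd0R : (0:ℝ) < (d₀:ℝ) := by exact_mod_cast lt_of_lt_of_le (by norm_num) hd₀
  have ha₂' : a * d₀ ≤ 2 * d₀ - 1 := by
    rw [le_div_iff₀ hd0R] at ha₂; linarith
  have hdR : (2:ℝ) ≤ (d:ℝ) := by exact_mod_cast hd₁
  have hdd₀ : (d:ℝ) ≤ (d₀:ℝ) - 1 := by exact_mod_cast hd₂
  have hpR : 4 * (d₀:ℝ) + 1 ≤ (p:ℝ) := by exact_mod_cast hp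
  have hxR : (0:ℝ) ≤ (x:ℝ) := by exact_mod_cast hx
  have hyR : (0:ℝ) ≤ (y:ℝ) := by exact_mod_cast hy
  have hgR : ((p:ℝ) + 3) * d - 1 ≤ (x:ℝ) + y := by exact_mod_cast hgenus
  -- the action inequality combined with the non-inclusion hypothesis
  have hA : (x:ℝ) + a * y < (2 * a + (p:ℝ)) * d := by
    have : (p:ℝ) * c * d < (2 * a + p) * d := by nlinarith
    linarith
  -- step 1: y ≤ d
  have hyd : y ≤ d := by
    by_contra h
    push_neg at h
    have hy1 : (d:ℝ) + 1 ≤ (y:ℝ) := by exact_mod_cast h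
    nlinarith [mul_nonneg (sub_nonneg.mpr ha₁) (by linarith : (0:ℝ) ≤ (y:ℝ) - (d + 1)),
      mul_pos hd0R hd0R]
  -- step 2: y ≥ d
  have hdy : d ≤ y := by
    by_contra h
    push_neg at h
    have hy2 : (y:ℝ) ≤ (d:ℝ) - 1 := by exact_mod_cast Int.le_sub_one_of_lt h
    -- bound x above
    have hxb : (x:ℝ) < ((p + 4) * d - 2 * y : ℤ) := by
      push_cast
      nlinarith [mul_le_mul_of_nonneg_right ha₂' (by linarith : (0:ℝ) ≤ 2 * d - y),
        mul_nonneg hyR (by linarith : (0:ℝ) ≤ a - 1)]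
    have hxZ : x ≤ (p + 4) * d - 2 * y - 1 := by
      have : x < (p + 4) * d - 2 * y := by exact_mod_cast hxb
      omega
    have hp' : 4 * d + 5 ≤ p := by omega
    nlinarith [mul_nonneg (by omega : (0:ℤ) ≤ y + 1) (by omega : (0:ℤ) ≤ (p + 4) * d - 2 * y - 1 - x),
      mul_nonneg (by omega : (0:ℤ) ≤ d - 1 - y) (by nlinarith : (0:ℤ) ≤ 2 * (p + 4) * d - 4 * y - 4 * d + 4),
      mul_nonneg (by omega : (0:ℤ) ≤ p - 4 * d - 5) (by omega : (0:ℤ) ≤ d)]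
  omega
end

section
/- Let x₀, y₀ be positive integers and let L be an integer with T ≤ L ≤ (x₀+1)·(y₀+1), where T = #{(x,y) ∈ ℤ² : x ≥ 0, y ≥ 0, y₀·x + x₀·y ≤ x₀·y₀}. Then there exists a finite set S of pairs of nonnegative integers such that: (a) S is downward closed, i.e. if (x,y) ∈ S and 0 ≤ x' ≤ x, 0 ≤ y' ≤ y then (x',y') ∈ S; (b) S is lattice-convex, i.e. every integer point of the convex hull of S in ℝ² lies in S; (c) (x₀,0) ∈ S, (0,y₀) ∈ S, and S ⊆ [0,x₀] × [0,y₀]; and (d) the cardinality of S equals L. -/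
/-!
Perturb the linear form `y₀ x + x₀ y` that cuts out the triangle to
`F(x, y) = x + (x₀ + 1)(y₀ x + x₀ y)`, which is injective on the strip `0 ≤ x ≤ x₀`.
The points of the rectangle `[0, x₀] × [0, y₀]` with `F ≤ c` form a downward-closed set, and
they are the lattice points of a convex polygon, hence lattice-convex. Raising `c` by one adds
at most one point, and as `c` runs from `x₀ + (x₀ + 1) x₀ y₀` to `x₀ + (x₀ + 1) 2 x₀ y₀` these
sets grow from the triangle to the whole rectangle, so every count in between is attained.
-/

open Finset

theorem Int.exists_eq_of_map_add_one_le {g : ℤ → ℤ} (hg : ∀ c, g (c + 1) ≤ g c + 1)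
    {a b L : ℤ} (hab : a ≤ b) (ha : g a ≤ L) (hb : L ≤ g b) : ∃ c, a ≤ c ∧ g c = L := by
  induction b, hab using Int.leInduction with
  | base => exact ⟨a, le_rfl, le_antisymm ha hb⟩
  | succ b hab ih =>
    by_cases hL : L ≤ g b
    · exact ih hL
    · exact ⟨b + 1, by omega, by linarith [hg b]⟩

theorem mem_of_mem_convexHull_of_forall_mem_iff {S : Set (ℤ × ℤ)} {C : Set (ℝ × ℝ)}
    (hC : Convex ℝ C) (hS : ∀ q : ℤ × ℤ, q ∈ S ↔ ((q.1 : ℝ), (q.2 : ℝ)) ∈ C) {q : ℤ × ℤ}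
    (hq : ((q.1 : ℝ), (q.2 : ℝ)) ∈
      convexHull ℝ ((fun p : ℤ × ℤ => ((p.1 : ℝ), (p.2 : ℝ))) '' S)) : q ∈ S :=
  (hS q).2 <| convexHull_min (Set.image_subset_iff.2 fun p hp => (hS p).1 hp) hC hq

namespace ConvexGenerator

variable {x₀ y₀ : ℤ}

def perturbedForm (x₀ y₀ : ℤ) (p : ℤ × ℤ) : ℤ := p.1 + (x₀ + 1) * (y₀ * p.1 + x₀ * p.2)

theorem perturbedForm_le_iff {p : ℤ × ℤ} (h₀ : 0 ≤ p.1) (h₁ : p.1 ≤ x₀) (k : ℤ) :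
    perturbedForm x₀ y₀ p ≤ x₀ + (x₀ + 1) * k ↔ y₀ * p.1 + x₀ * p.2 ≤ k := by
  unfold perturbedForm
  constructor
  · intro h
    by_contra! hk
    nlinarith
  · intro h
    nlinarith

theorem perturbedForm_injOn (hx : 0 < x₀) :
    Set.InjOn (perturbedForm x₀ y₀) {p | 0 ≤ p.1 ∧ p.1 ≤ x₀} := by
  rintro p ⟨hp₀, hp₁⟩ q ⟨hq₀, hq₁⟩ h
  have h₁ : p.1 = q.1 := by
    -- `F (x, y) ≡ x [ZMOD x₀ + 1]` and `0 ≤ x ≤ x₀`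
    have := congrArg (· % (x₀ + 1)) h
    simpa [perturbedForm, Int.emod_eq_of_lt, *, Int.lt_add_one_iff] using this
  have h₂ : p.2 = q.2 := by
    unfold perturbedForm at h
    rw [h₁] at h
    have : (x₀ + 1) * x₀ * p.2 = (x₀ + 1) * x₀ * q.2 := by linarith
    exact mul_left_cancel₀ (by positivity) this
  exact Prod.ext h₁ h₂

theorem perturbedForm_mono (hx : 0 ≤ x₀) (hy : 0 ≤ y₀) {p q : ℤ × ℤ} (h₁ : q.1 ≤ p.1)
    (h₂ : q.2 ≤ p.2) : perturbedForm x₀ y₀ q ≤ perturbedForm x₀ y₀ p := by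
  unfold perturbedForm
  gcongr

noncomputable def sublevel (x₀ y₀ c : ℤ) : Finset (ℤ × ℤ) :=
  (Icc 0 x₀ ×ˢ Icc 0 y₀).filter (perturbedForm x₀ y₀ · ≤ c)

theorem mem_sublevel {c : ℤ} {p : ℤ × ℤ} :
    p ∈ sublevel x₀ y₀ c ↔
      0 ≤ p.1 ∧ p.1 ≤ x₀ ∧ 0 ≤ p.2 ∧ p.2 ≤ y₀ ∧ perturbedForm x₀ y₀ p ≤ c := by
  simp [sublevel, and_assoc]

theorem card_sublevel_add_one_le (hx : 0 < x₀) (c : ℤ) :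
    #(sublevel x₀ y₀ (c + 1)) ≤ #(sublevel x₀ y₀ c) + 1 := by
  have hsub : sublevel x₀ y₀ c ⊆ sublevel x₀ y₀ (c + 1) := by
    intro p hp
    rw [mem_sublevel] at hp ⊢
    omega
  have hnew : #(sublevel x₀ y₀ (c + 1) \ sublevel x₀ y₀ c) ≤ #{c + 1} := by
    refine card_le_card_of_injOn (perturbedForm x₀ y₀) (fun p hp => ?_)
      ((perturbedForm_injOn hx).mono fun p hp => ?_) <;>
    simp only [coe_sdiff, Set.mem_sdiff, mem_coe, mem_sublevel, coe_singleton,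
      Set.mem_singleton_iff, Set.mem_ofPred_eq] at hp ⊢ <;>
    omega
  have := card_sdiff_add_card_eq_card hsub
  rw [card_singleton] at hnew
  omega

theorem ncard_triangle (hx : 0 < x₀) (hy : 0 < y₀) :
    {p : ℤ × ℤ | 0 ≤ p.1 ∧ 0 ≤ p.2 ∧ y₀ * p.1 + x₀ * p.2 ≤ x₀ * y₀}.ncard =
      #(sublevel x₀ y₀ (x₀ + (x₀ + 1) * (x₀ * y₀))) := by
  rw [← Set.ncard_coe_finset]
  congr 1
  ext p
  simp only [Set.mem_ofPred_eq, mem_coe, mem_sublevel]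
  constructor
  · rintro ⟨h₁, h₂, h⟩
    have hp₁ : p.1 ≤ x₀ := by nlinarith
    have hp₂ : p.2 ≤ y₀ := by nlinarith
    exact ⟨h₁, hp₁, h₂, hp₂, (perturbedForm_le_iff h₁ hp₁ _).2 h⟩
  · rintro ⟨h₁, hp₁, h₂, -, h⟩
    exact ⟨h₁, h₂, (perturbedForm_le_iff h₁ hp₁ _).1 h⟩

theorem sublevel_eq_rectangle (hx : 0 ≤ x₀) (hy : 0 ≤ y₀) :
    sublevel x₀ y₀ (x₀ + (x₀ + 1) * (2 * x₀ * y₀)) = Icc 0 x₀ ×ˢ Icc 0 y₀ := by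
  refine filter_true_of_mem fun p hp => ?_
  simp only [mem_product, mem_Icc] at hp
  exact (perturbedForm_le_iff hp.1.1 hp.1.2 _).2 (by nlinarith)

theorem card_sublevel_rectangle (hx : 0 ≤ x₀) (hy : 0 ≤ y₀) :
    (#(sublevel x₀ y₀ (x₀ + (x₀ + 1) * (2 * x₀ * y₀))) : ℤ) = (x₀ + 1) * (y₀ + 1) := by
  rw [sublevel_eq_rectangle hx hy, card_product, Int.card_Icc, Int.card_Icc]
  push_cast
  rw [Int.toNat_of_nonneg (by omega), Int.toNat_of_nonneg (by omega)]
  ring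

theorem mem_sublevel_of_le (hx : 0 ≤ x₀) (hy : 0 ≤ y₀) {c : ℤ} {p q : ℤ × ℤ}
    (hp : p ∈ sublevel x₀ y₀ c) (h₀ : 0 ≤ q.1) (h₁ : q.1 ≤ p.1) (h₂ : 0 ≤ q.2)
    (h₃ : q.2 ≤ p.2) : q ∈ sublevel x₀ y₀ c := by
  rw [mem_sublevel] at hp ⊢
  have := perturbedForm_mono hx hy h₁ h₃
  omega

theorem mem_sublevel_of_mem_convexHull {c : ℤ} {q : ℤ × ℤ}
    (hq : ((q.1 : ℝ), (q.2 : ℝ)) ∈ convexHull ℝ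
      ((fun p : ℤ × ℤ => ((p.1 : ℝ), (p.2 : ℝ))) '' (sublevel x₀ y₀ c : Set (ℤ × ℤ)))) :
    q ∈ sublevel x₀ y₀ c := by
  have hlin : IsLinearMap ℝ fun v : ℝ × ℝ => v.1 + (x₀ + 1) * (y₀ * v.1 + x₀ * v.2) :=
    ⟨fun v w => by simp only [Prod.fst_add, Prod.snd_add]; ring,
      fun r v => by simp only [Prod.smul_fst, Prod.smul_snd, smul_eq_mul]; ring⟩
  refine mem_of_mem_convexHull_of_forall_mem_iff
    (((convex_Icc 0 (x₀ : ℝ)).prod (convex_Icc 0 (y₀ : ℝ))).inter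
      (convex_halfSpace_le hlin c)) (fun p => ?_) hq
  simp only [mem_coe, mem_sublevel, perturbedForm, Set.mem_inter_iff, Set.mem_prod,
    Set.mem_Icc, Set.mem_ofPred_eq, and_assoc]
  norm_cast

end ConvexGenerator

open ConvexGenerator in
/-- Every lattice count `L` between the triangle count `T` and the rectangle count
`(x₀+1)(y₀+1)` is realized by a downward-closed lattice-convex set of nonnegative lattice
points containing `(x₀,0)` and `(0,y₀)` inside the rectangle `[0,x₀] × [0,y₀]` (i.e. by
the lattice-point set of a purely elliptic convex generator with the given intercepts). -/
theorem exists_generator_with_count (x₀ y₀ : ℤ) (hx : 0 < x₀) (hy : 0 < y₀) (L : ℤ)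
    (hT : ({p : ℤ × ℤ | 0 ≤ p.1 ∧ 0 ≤ p.2 ∧ y₀ * p.1 + x₀ * p.2 ≤ x₀ * y₀}.ncard : ℤ) ≤ L)
    (hL : L ≤ (x₀ + 1) * (y₀ + 1)) :
    ∃ S : Finset (ℤ × ℤ),
      (∀ p ∈ S, 0 ≤ p.1 ∧ 0 ≤ p.2) ∧
      (∀ p ∈ S, ∀ q : ℤ × ℤ, 0 ≤ q.1 → q.1 ≤ p.1 → 0 ≤ q.2 → q.2 ≤ p.2 → q ∈ S) ∧
      (∀ q : ℤ × ℤ,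
        ((q.1 : ℝ), (q.2 : ℝ)) ∈
          convexHull ℝ ((fun p : ℤ × ℤ => ((p.1 : ℝ), (p.2 : ℝ))) '' (S : Set (ℤ × ℤ))) →
        q ∈ S) ∧
      ((x₀, 0) ∈ S ∧ (0, y₀) ∈ S ∧ ∀ p ∈ S, p.1 ≤ x₀ ∧ p.2 ≤ y₀) ∧
      (S.card : ℤ) = L := by
  rw [ncard_triangle hx hy] at hT
  obtain ⟨c, hc, hcard⟩ := Int.exists_eq_of_map_add_one_le (g := fun c => #(sublevel x₀ y₀ c))
    (fun c => by exact_mod_cast card_sublevel_add_one_le hx c) (by gcongr; nlinarith) hT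
    ((card_sublevel_rectangle hx.le hy.le).symm ▸ hL)
  have hcorner {p : ℤ × ℤ} (h₀ : 0 ≤ p.1) (h₁ : p.1 ≤ x₀) (h₂ : 0 ≤ p.2) (h₃ : p.2 ≤ y₀)
      (h : y₀ * p.1 + x₀ * p.2 ≤ x₀ * y₀) : p ∈ sublevel x₀ y₀ c :=
    mem_sublevel.2 ⟨h₀, h₁, h₂, h₃, ((perturbedForm_le_iff h₀ h₁ _).2 h).trans hc⟩
  refine ⟨sublevel x₀ y₀ c, fun p hp => ?_, fun p hp q => mem_sublevel_of_le hx.le hy.le hp,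
    fun q => mem_sublevel_of_mem_convexHull, ⟨?_, ?_, fun p hp => ?_⟩, hcard⟩
  · rw [mem_sublevel] at hp; exact ⟨hp.1, hp.2.2.1⟩
  · exact hcorner hx.le le_rfl le_rfl hy.le (by simp [mul_comm])
  · exact hcorner le_rfl hx.le hy.le le_rfl (by simp)
  · rw [mem_sublevel] at hp; exact ⟨hp.2.1, hp.2.2.2.1⟩
end

section
/- Let ε > 0 be real, let d₀ ≥ 2 be an integer, set a = (2·d₀ − 1)/d₀ + ε, let c > 0 be real, and let p > 2 be an odd integer with 2·a + p − ε/2 < p·c. Then, writing x = (p+2)·d₀ − 1 and y = d₀, there exists a finite set S of pairs of nonnegative integers such that: (a) S is downward closed, i.e. if (u,v) ∈ S and 0 ≤ u' ≤ u, 0 ≤ v' ≤ v then (u',v') ∈ S; (b) S is lattice-convex, i.e. every integer point of the convex hull of S in ℝ² lies in S; (c) (x,0) ∈ S, (0,y) ∈ S, and S ⊆ [0,x] × [0,y]; (d) 2·(|S| − 1) = 2·p·d₀² + (p+3)·d₀; and moreover (e) x + a·y ≤ p·c·d₀ and x + y ≥ (p+3)·d₀ − 1. -/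
private lemma sum_max_shift_nat (k : ℤ) (hk : 0 ≤ k) (n : ℕ) :
    2 * ∑ v ∈ Finset.Icc (0:ℤ) (k + n), max 0 (v - k) = (n : ℤ) * (n + 1) := by
  induction n with
  | zero =>
    have : ∑ v ∈ Finset.Icc (0:ℤ) (k + (0:ℕ)), max 0 (v - k) = 0 := by
      apply Finset.sum_eq_zero
      intro v hv
      rw [Finset.mem_Icc] at hv
      exact max_eq_left (by omega)
    rw [this]; norm_num
  | succ n ih =>
    have hins : Finset.Icc (0:ℤ) (k + (n+1 : ℕ)) = insert (k + (n:ℕ) + 1) (Finset.Icc 0 (k + n)) := by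
      ext v; simp [Finset.mem_Icc]; omega
    rw [hins, Finset.sum_insert (by simp [Finset.mem_Icc])]
    have hm : max 0 (k + (n:ℕ) + 1 - k) = k + (n:ℤ) + 1 - k := max_eq_right (by omega)
    rw [hm]
    push_cast
    nlinarith [ih]

private lemma sum_max_Icc (k d : ℤ) (hk : 0 ≤ k) (hkd : k ≤ d) :
    2 * ∑ v ∈ Finset.Icc (0:ℤ) d, max 0 (v - k) = (d - k) * (d - k + 1) := by
  obtain ⟨n, hn⟩ : ∃ n : ℕ, d = k + n := ⟨(d - k).toNat, by omega⟩
  subst hn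
  rw [sum_max_shift_nat k hk n]; push_cast; ring

private lemma tri_decomp : ∀ (n : ℕ) (r : ℤ), 0 ≤ r → 2 * r < (n:ℤ) * (n + 1) →
    ∃ t l : ℤ, 0 ≤ l ∧ l ≤ t ∧ t + 1 ≤ (n:ℤ) ∧ t * (t + 1) + 2 * l = 2 * r := by
  intro n
  induction n with
  | zero => intro r hr h; push_cast at h; omega
  | succ n ih =>
    intro r hr h
    rcases lt_or_ge (2*r) ((n:ℤ) * (n+1)) with h' | h'
    · obtain ⟨t, l, h1, h2, h3, h4⟩ := ih r hr h'
      exact ⟨t, l, h1, h2, by push_cast; omega, h4⟩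
    · obtain ⟨T, hT⟩ : ∃ T : ℤ, (n:ℤ) * (n+1) = T + T := Int.even_mul_succ_self (n:ℤ)
      push_cast at h
      have hx : ((n:ℤ)+1) * ((n:ℤ)+1+1) = T + T + 2*(n:ℤ) + 2 := by linear_combination hT
      refine ⟨n, r - T, by linarith, by linarith, by push_cast; omega, by linear_combination hT⟩

private lemma params_aux (d₀ m : ℤ) (hd : 2 ≤ d₀) (hm : 2 ≤ m) :
    ∃ s t l : ℤ, 0 ≤ s ∧ 0 ≤ l ∧ l ≤ t ∧ t + 1 ≤ d₀ ∧
      s * (d₀ * (d₀ + 1)) + t * (t + 1) + 2 * l = 4 * d₀ ^ 2 + 2 * m * d₀ - 2 ∧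
      s * d₀ + t + l ≤ (2 * m + 1) * d₀ - 1 := by
  set R2 : ℤ := 4 * d₀ ^ 2 + 2 * m * d₀ - 2 with hR2
  have hR2pos : 0 < R2 := by nlinarith
  have hDpos : 0 < d₀ * (d₀ + 1) := by positivity
  set s : ℤ := R2 / (d₀ * (d₀ + 1)) with hs
  set rem : ℤ := R2 % (d₀ * (d₀ + 1)) with hrem
  have hdiv : d₀ * (d₀ + 1) * s + rem = R2 := by
    rw [hs, hrem]; exact Int.mul_ediv_add_emod R2 (d₀ * (d₀ + 1))
  have hrem0 : 0 ≤ rem := Int.emod_nonneg _ (by positivity)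
  have hremlt : rem < d₀ * (d₀ + 1) := Int.emod_lt_of_pos _ hDpos
  have hs0 : 0 ≤ s := Int.ediv_nonneg (le_of_lt hR2pos) (le_of_lt hDpos)
  have hevenrem : ∃ r : ℤ, rem = 2 * r := by
    obtain ⟨T, hT⟩ : ∃ T : ℤ, d₀ * (d₀ + 1) = T + T := Int.even_mul_succ_self d₀
    refine ⟨(rem)/2, ?_⟩
    have : Even rem := by
      have h1 : rem = R2 - d₀ * (d₀ + 1) * s := by omega
      have h2 : Even R2 := ⟨2*d₀^2 + m*d₀ - 1, by ring⟩
      have h3 : Even (d₀ * (d₀ + 1) * s) := ⟨T * s, by rw [hT]; ring⟩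
      rw [h1]; exact h2.sub h3
    obtain ⟨u, hu⟩ := this
    omega
  obtain ⟨r, hr⟩ := hevenrem
  have hnn : d₀ = ((d₀.toNat : ℤ)) := by omega
  obtain ⟨t, l, hl0, hlt, ht1, heq⟩ := tri_decomp d₀.toNat r (by omega)
    (by rw [← hnn]; omega)
  have ht1' : t + 1 ≤ d₀ := by omega
  have ht0 : 0 ≤ t := le_trans hl0 hlt
  have hc : s * (d₀ * (d₀ + 1)) = d₀ * (d₀ + 1) * s := mul_comm _ _
  refine ⟨s, t, l, hs0, hl0, hlt, ht1', by omega, ?_⟩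
  have hkey : d₀ * (d₀ + 1) * s = R2 - t * (t + 1) - 2 * l := by omega
  have hE : (d₀ + 1) * (s * d₀ + t + l) ≤ (d₀ + 1) * ((2 * m + 1) * d₀ - 1) := by
    nlinarith [sq_nonneg (d₀ - t), mul_nonneg (by omega : (0:ℤ) ≤ t - l) (by omega : (0:ℤ) ≤ d₀ - 1),
      mul_nonneg (by omega : (0:ℤ) ≤ m - 2) (sq_nonneg d₀)]
  exact le_of_mul_le_mul_left hE (by omega)

private lemma convex_hp (α β γ : ℝ) : Convex ℝ {z : ℝ × ℝ | α * z.1 + β * z.2 ≤ γ} := by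
  intro u hu v hv b c hb hc hbc
  simp only [Set.mem_setOf_eq] at hu hv ⊢
  have h1 : (b • u + c • v).1 = b * u.1 + c * v.1 := rfl
  have h2 : (b • u + c • v).2 = b * u.2 + c * v.2 := rfl
  rw [h1, h2]
  have e : α * (b * u.1 + c * v.1) + β * (b * u.2 + c * v.2)
      = b * (α * u.1 + β * u.2) + c * (α * v.1 + β * v.2) := by ring
  rw [e]
  calc b * (α * u.1 + β * u.2) + c * (α * v.1 + β * v.2)
      ≤ b * γ + c * γ := by
        gcongr <;> assumption
    _ = γ := by rw [← add_mul, hbc, one_mul]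

/-- Limitation of the Hutchings criterion beyond `a = (2d₀−1)/d₀`: with
`a = (2d₀−1)/d₀ + ε` and `2a + p − ε/2 < pc`, there always exists the lattice-point set
of a purely elliptic convex generator `Λ` with `x(Λ) = (p+2)d₀ − 1`, `y(Λ) = d₀`,
`I(Λ) = I(e_{p,2}^{d₀})`, satisfying the action and genus inequalities of
`Λ ≤ e_{p,2}^{d₀}`. -/
theorem no_obstruction_larger_a (ε : ℝ) (hε : 0 < ε) (d₀ : ℤ) (hd₀ : 2 ≤ d₀)
    (a : ℝ) (ha : a = (2 * d₀ - 1) / d₀ + ε) (c : ℝ) (hc : 0 < c)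
    (p : ℤ) (hp : 2 < p) (hodd : Odd p)
    (hpc : 2 * a + p - ε / 2 < p * c) :
    ∃ S : Finset (ℤ × ℤ),
      (∀ v ∈ S, 0 ≤ v.1 ∧ 0 ≤ v.2) ∧
      (∀ v ∈ S, ∀ w : ℤ × ℤ, 0 ≤ w.1 → w.1 ≤ v.1 → 0 ≤ w.2 → w.2 ≤ v.2 → w ∈ S) ∧
      (∀ w : ℤ × ℤ,
        ((w.1 : ℝ), (w.2 : ℝ)) ∈
          convexHull ℝ ((fun v : ℤ × ℤ => ((v.1 : ℝ), (v.2 : ℝ))) '' (S : Set (ℤ × ℤ))) →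
        w ∈ S) ∧
      (((p + 2) * d₀ - 1, 0) ∈ S ∧ (0, d₀) ∈ S ∧
        ∀ v ∈ S, v.1 ≤ (p + 2) * d₀ - 1 ∧ v.2 ≤ d₀) ∧
      2 * ((S.card : ℤ) - 1) = 2 * p * d₀ ^ 2 + (p + 3) * d₀ ∧
      (((p + 2) * d₀ - 1 : ℤ) : ℝ) + a * d₀ ≤ p * c * d₀ ∧
      ((p + 2) * d₀ - 1) + d₀ ≥ (p + 3) * d₀ - 1 := by
  obtain ⟨kk, hkk⟩ := hodd
  set m : ℤ := kk + 1 with hmdef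
  have hpm : p = 2 * m - 1 := by omega
  have hm : 2 ≤ m := by omega
  obtain ⟨s, t, l, hs0, hl0, hlt, ht1, heq, hbound⟩ := params_aux d₀ m hd₀ hm
  have ht0 : 0 ≤ t := le_trans hl0 hlt
  set x : ℤ := (p + 2) * d₀ - 1 with hxdef
  have hxm : x = (2 * m + 1) * d₀ - 1 := by
    rw [hxdef]; linear_combination d₀ * hpm
  set k₁ : ℤ := d₀ - t with hk₁
  set f : ℤ → ℤ := fun v => x - s * v - max 0 (v - k₁) - l * max 0 (v - (d₀ - 1)) with hf
  set S : Finset (ℤ × ℤ) :=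
    (Finset.Icc (0:ℤ) d₀).biUnion
      (fun v => (Finset.Icc (0:ℤ) (f v)).image (fun u => (u, v))) with hS
  have hmem : ∀ w : ℤ × ℤ, w ∈ S ↔ (0 ≤ w.2 ∧ w.2 ≤ d₀) ∧ (0 ≤ w.1 ∧ w.1 ≤ f w.2) := by
    intro w
    rw [hS]
    simp only [Finset.mem_biUnion, Finset.mem_image, Finset.mem_Icc]
    constructor
    · rintro ⟨v, hv, u, hu, rfl⟩; exact ⟨hv, hu⟩
    · rintro ⟨hv, hu⟩; exact ⟨w.2, hv, w.1, hu, rfl⟩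
  -- basic facts about f
  have hfanti : ∀ v v' : ℤ, v ≤ v' → f v' ≤ f v := by
    intro v v' hvv
    have h1 : max 0 (v - k₁) ≤ max 0 (v' - k₁) := max_le_max le_rfl (by omega)
    have h2 : l * max 0 (v - (d₀ - 1)) ≤ l * max 0 (v' - (d₀ - 1)) :=
      mul_le_mul_of_nonneg_left (max_le_max le_rfl (by omega)) hl0
    have h3 : s * v ≤ s * v' := mul_le_mul_of_nonneg_left hvv hs0
    simp only [hf]
    linarith
  have hflow : ∀ v : ℤ, 0 ≤ v → v ≤ d₀ → x - s * d₀ - t - l ≤ f v := by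
    intro v hv0 hvd
    have h1 : max 0 (v - k₁) ≤ t := max_le ht0 (by omega)
    have h2 : l * max 0 (v - (d₀ - 1)) ≤ l * 1 :=
      mul_le_mul_of_nonneg_left (max_le (by norm_num) (by omega)) hl0
    have h3 : s * v ≤ s * d₀ := mul_le_mul_of_nonneg_left hvd hs0
    simp only [hf]
    linarith
  have hfd0 : 0 ≤ x - s * d₀ - t - l := by
    have := hbound
    omega
  have hf0 : ∀ v : ℤ, 0 ≤ v → v ≤ d₀ → 0 ≤ f v := fun v h1 h2 =>
    le_trans hfd0 (hflow v h1 h2)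
  have hfle1 : ∀ v : ℤ, f v ≤ x - s * v := by
    intro v
    have h1 : (0:ℤ) ≤ max 0 (v - k₁) := le_max_left _ _
    have h2 : (0:ℤ) ≤ l * max 0 (v - (d₀ - 1)) :=
      mul_nonneg hl0 (le_max_left _ _)
    simp only [hf]; linarith
  have hfle2 : ∀ v : ℤ, f v ≤ x + k₁ - (s + 1) * v := by
    intro v
    have h1 : v - k₁ ≤ max 0 (v - k₁) := le_max_right _ _
    have h2 : (0:ℤ) ≤ l * max 0 (v - (d₀ - 1)) := mul_nonneg hl0 (le_max_left _ _)
    have h3 : (s + 1) * v = s * v + v := by ring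
    simp only [hf]; linarith
  have hfle3 : ∀ v : ℤ, f v ≤ x + k₁ + l * (d₀ - 1) - (s + 1 + l) * v := by
    intro v
    have h1 : v - k₁ ≤ max 0 (v - k₁) := le_max_right _ _
    have h2 : l * (v - (d₀ - 1)) ≤ l * max 0 (v - (d₀ - 1)) :=
      mul_le_mul_of_nonneg_left (le_max_right _ _) hl0
    have h3 : (s + 1 + l) * v = s * v + v + l * v := by ring
    have h4 : l * (v - (d₀ - 1)) = l * v - l * (d₀ - 1) := by ring
    simp only [hf]; linarith
  have hfge : ∀ u v : ℤ, 0 ≤ v → v ≤ d₀ → u + s * v ≤ x →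
      u + (s + 1) * v ≤ x + k₁ → u + (s + 1 + l) * v ≤ x + k₁ + l * (d₀ - 1) →
      u ≤ f v := by
    intro u v hv0 hvd c1 c2 c3
    have e1 : (s + 1) * v = s * v + v := by ring
    have e2 : (s + 1 + l) * v = s * v + v + l * v := by ring
    rcases le_or_gt v k₁ with hvk | hvk
    · rcases le_or_gt v (d₀ - 1) with hvd1 | hvd1
      · have hA : max 0 (v - k₁) = 0 := max_eq_left (by omega)
        have hB : max 0 (v - (d₀ - 1)) = 0 := max_eq_left (by omega)
        simp only [hf, hA, hB]
        linarith
      · have hl00 : l = 0 := by omega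
        have hA : max 0 (v - k₁) = 0 := max_eq_left (by omega)
        simp only [hf, hA, hl00]
        linarith
    · rcases le_or_gt v (d₀ - 1) with hvd1 | hvd1
      · have hA : max 0 (v - k₁) = v - k₁ := max_eq_right (by omega)
        have hB : max 0 (v - (d₀ - 1)) = 0 := max_eq_left (by omega)
        simp only [hf, hA, hB]
        linarith
      · have hA : max 0 (v - k₁) = v - k₁ := max_eq_right (by omega)
        have hB : max 0 (v - (d₀ - 1)) = v - (d₀ - 1) := max_eq_right (by omega)
        have h4 : l * (v - (d₀ - 1)) = l * v - l * (d₀ - 1) := by ring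
        simp only [hf, hA, hB]
        linarith
  refine ⟨S, ?_, ?_, ?_, ⟨?_, ?_, ?_⟩, ?_, ?_, ?_⟩
  · -- nonneg
    intro v hv
    obtain ⟨⟨h1, _⟩, ⟨h2, _⟩⟩ := (hmem v).1 hv
    exact ⟨h2, h1⟩
  · -- downward closed
    intro v hv w hw1 hw2 hw3 hw4
    obtain ⟨⟨h1, h2⟩, ⟨h3, h4⟩⟩ := (hmem v).1 hv
    refine (hmem w).2 ⟨⟨hw3, le_trans hw4 h2⟩, ⟨hw1, ?_⟩⟩
    exact le_trans hw2 (le_trans h4 (hfanti w.2 v.2 hw4))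
  · -- lattice convexity
    intro w hw
    have key : ∀ α β γ : ℝ, (∀ z : ℤ × ℤ, z ∈ S → α * (z.1:ℝ) + β * (z.2:ℝ) ≤ γ) →
        α * (w.1:ℝ) + β * (w.2:ℝ) ≤ γ := by
      intro α β γ hzs
      have hsub : (fun v : ℤ × ℤ => ((v.1 : ℝ), (v.2 : ℝ))) '' (S : Set (ℤ × ℤ)) ⊆
          {z : ℝ × ℝ | α * z.1 + β * z.2 ≤ γ} := by
        rintro _ ⟨z, hz, rfl⟩
        exact hzs z hz
      exact convexHull_min hsub (convex_hp α β γ) hw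
    have hw1 : (0:ℝ) ≤ (w.1:ℝ) := by
      have := key (-1) 0 0 (by
        intro z hz
        obtain ⟨_, ⟨h3, _⟩⟩ := (hmem z).1 hz
        have : (0:ℝ) ≤ (z.1:ℝ) := by exact_mod_cast h3
        linarith)
      linarith
    have hw2 : (0:ℝ) ≤ (w.2:ℝ) := by
      have := key 0 (-1) 0 (by
        intro z hz
        obtain ⟨⟨h1, _⟩, _⟩ := (hmem z).1 hz
        have : (0:ℝ) ≤ (z.2:ℝ) := by exact_mod_cast h1
        linarith)
      linarith
    have hw3 : (w.2:ℝ) ≤ (d₀:ℝ) := by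
      have := key 0 1 (d₀:ℝ) (by
        intro z hz
        obtain ⟨⟨_, h2⟩, _⟩ := (hmem z).1 hz
        have : (z.2:ℝ) ≤ (d₀:ℝ) := by exact_mod_cast h2
        linarith)
      linarith
    have hw4 : (w.1:ℝ) + (s:ℝ) * (w.2:ℝ) ≤ (x:ℝ) := by
      have := key 1 (s:ℝ) (x:ℝ) (by
        intro z hz
        obtain ⟨⟨h1, h2⟩, ⟨h3, h4⟩⟩ := (hmem z).1 hz
        have h5 : z.1 + s * z.2 ≤ x := by
          have := hfle1 z.2; omega
        have : (z.1:ℝ) + (s:ℝ) * (z.2:ℝ) ≤ (x:ℝ) := by exact_mod_cast h5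
        linarith)
      linarith
    have hw5 : (w.1:ℝ) + ((s:ℝ) + 1) * (w.2:ℝ) ≤ (x:ℝ) + (k₁:ℝ) := by
      have := key 1 ((s:ℝ) + 1) ((x:ℝ) + (k₁:ℝ)) (by
        intro z hz
        obtain ⟨⟨h1, h2⟩, ⟨h3, h4⟩⟩ := (hmem z).1 hz
        have h5 : z.1 + (s + 1) * z.2 ≤ x + k₁ := by
          have := hfle2 z.2; omega
        have : (z.1:ℝ) + ((s:ℝ) + 1) * (z.2:ℝ) ≤ (x:ℝ) + (k₁:ℝ) := by
          exact_mod_cast h5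
        linarith)
      linarith
    have hw6 : (w.1:ℝ) + ((s:ℝ) + 1 + (l:ℝ)) * (w.2:ℝ) ≤ (x:ℝ) + (k₁:ℝ) + (l:ℝ) * ((d₀:ℝ) - 1) := by
      have := key 1 ((s:ℝ) + 1 + (l:ℝ)) ((x:ℝ) + (k₁:ℝ) + (l:ℝ) * ((d₀:ℝ) - 1)) (by
        intro z hz
        obtain ⟨⟨h1, h2⟩, ⟨h3, h4⟩⟩ := (hmem z).1 hz
        have h5 : z.1 + (s + 1 + l) * z.2 ≤ x + k₁ + l * (d₀ - 1) := by
          have := hfle3 z.2; omega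
        have : (z.1:ℝ) + ((s:ℝ) + 1 + (l:ℝ)) * (z.2:ℝ) ≤ (x:ℝ) + (k₁:ℝ) + (l:ℝ) * ((d₀:ℝ) - 1) := by
          exact_mod_cast h5
        linarith)
      linarith
    -- back to integers
    have i1 : 0 ≤ w.1 := by exact_mod_cast hw1
    have i2 : 0 ≤ w.2 := by exact_mod_cast hw2
    have i3 : w.2 ≤ d₀ := by exact_mod_cast hw3
    have i4 : w.1 + s * w.2 ≤ x := by exact_mod_cast hw4
    have i5 : w.1 + (s + 1) * w.2 ≤ x + k₁ := by exact_mod_cast hw5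
    have i6 : w.1 + (s + 1 + l) * w.2 ≤ x + k₁ + l * (d₀ - 1) := by exact_mod_cast hw6
    exact (hmem w).2 ⟨⟨i2, i3⟩, ⟨i1, hfge w.1 w.2 i2 i3 i4 i5 i6⟩⟩
  · -- (x, 0) ∈ S
    refine (hmem ((p + 2) * d₀ - 1, 0)).2 ⟨⟨le_refl 0, by omega⟩, ⟨by nlinarith, ?_⟩⟩
    have hA : max 0 ((0:ℤ) - k₁) = 0 := max_eq_left (by omega)
    have hB : max 0 ((0:ℤ) - (d₀ - 1)) = 0 := max_eq_left (by omega)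
    show (p + 2) * d₀ - 1 ≤ f 0
    simp only [hf, hA, hB, mul_zero, sub_zero]
    omega
  · -- (0, d₀) ∈ S
    exact (hmem (0, d₀)).2 ⟨⟨by omega, le_refl _⟩, ⟨le_refl 0, hf0 d₀ (by omega) (le_refl _)⟩⟩
  · -- bounds
    intro v hv
    obtain ⟨⟨h1, h2⟩, ⟨h3, h4⟩⟩ := (hmem v).1 hv
    constructor
    · have h5 := hfle1 v.2
      have h6 : 0 ≤ s * v.2 := mul_nonneg hs0 h1
      omega
    · exact h2
  · -- cardinality
    have hdisj : ∀ v₁ ∈ Finset.Icc (0:ℤ) d₀, ∀ v₂ ∈ Finset.Icc (0:ℤ) d₀, v₁ ≠ v₂ →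
        Disjoint ((Finset.Icc (0:ℤ) (f v₁)).image (fun u => (u, v₁)))
          ((Finset.Icc (0:ℤ) (f v₂)).image (fun u => (u, v₂))) := by
      intro v₁ _ v₂ _ hne
      rw [Finset.disjoint_left]
      rintro w hw1 hw2
      simp only [Finset.mem_image] at hw1 hw2
      obtain ⟨u1, _, rfl⟩ := hw1
      obtain ⟨u2, _, hu2⟩ := hw2
      exact hne (by simpa using congrArg Prod.snd hu2.symm)
    have hcard : (S.card : ℤ) = ∑ v ∈ Finset.Icc (0:ℤ) d₀, (f v + 1) := by
      rw [hS, Finset.card_biUnion hdisj]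
      push_cast
      apply Finset.sum_congr rfl
      intro v hv
      rw [Finset.mem_Icc] at hv
      rw [Finset.card_image_of_injective _ (fun a b h => by simpa using h)]
      rw [Int.card_Icc]
      have := hf0 v hv.1 hv.2
      omega
    have hsum1 : 2 * ∑ v ∈ Finset.Icc (0:ℤ) d₀, max 0 (v - 0) = d₀ * (d₀ + 1) := by
      have := sum_max_Icc 0 d₀ le_rfl (by omega)
      simpa using this
    have hsum1' : 2 * ∑ v ∈ Finset.Icc (0:ℤ) d₀, v = d₀ * (d₀ + 1) := by
      rw [← hsum1]
      congr 1
      apply Finset.sum_congr rfl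
      intro v hv
      rw [Finset.mem_Icc] at hv
      rw [sub_zero]
      exact (max_eq_right hv.1).symm
    have hsum2 : 2 * ∑ v ∈ Finset.Icc (0:ℤ) d₀, max 0 (v - k₁) = t * (t + 1) := by
      have := sum_max_Icc k₁ d₀ (by omega) (by omega)
      rw [this]
      have : d₀ - k₁ = t := by omega
      rw [this]
    have hsum3 : 2 * ∑ v ∈ Finset.Icc (0:ℤ) d₀, max 0 (v - (d₀ - 1)) = 2 := by
      have := sum_max_Icc (d₀ - 1) d₀ (by omega) (by omega)
      rw [this]
      norm_num
    have hexp : ∀ v : ℤ, f v + 1 = (x + 1) - s * v - max 0 (v - k₁) - l * max 0 (v - (d₀ - 1)) := by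
      intro v; simp only [hf]; ring
    have hcc : (((Finset.Icc (0:ℤ) d₀).card : ℤ)) = d₀ + 1 := by
      rw [Int.card_Icc]; omega
    have hcount : 2 * (∑ v ∈ Finset.Icc (0:ℤ) d₀, (f v + 1)) =
        2 * (d₀ + 1) * (x + 1) - s * (d₀ * (d₀ + 1)) - t * (t + 1) - 2 * l := by
      rw [Finset.sum_congr rfl (fun v _ => hexp v)]
      rw [Finset.sum_sub_distrib, Finset.sum_sub_distrib, Finset.sum_sub_distrib,
        Finset.sum_const, ← Finset.mul_sum, ← Finset.mul_sum]
      have hsm : ((Finset.Icc (0:ℤ) d₀).card) • (x + 1) = (d₀ + 1) * (x + 1) := by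
        rw [nsmul_eq_mul, hcc]
      rw [hsm]
      have e2 : 2 * (s * ∑ v ∈ Finset.Icc (0:ℤ) d₀, v) = s * (d₀ * (d₀ + 1)) := by
        linear_combination s * hsum1'
      have e3 : 2 * (l * ∑ v ∈ Finset.Icc (0:ℤ) d₀, max 0 (v - (d₀ - 1))) = 2 * l := by
        linear_combination l * hsum3
      linarith [hsum2, e2, e3]
    rw [hcard]
    have e4 : 2 * (∑ v ∈ Finset.Icc (0:ℤ) d₀, (f v + 1)) =
        2 * (d₀ + 1) * (x + 1) - (4 * d₀ ^ 2 + 2 * m * d₀ - 2) := by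
      rw [hcount]; linarith [heq]
    have hgoal : 2 * (d₀ + 1) * (x + 1) - (4 * d₀ ^ 2 + 2 * m * d₀ - 2) - 2 =
        2 * p * d₀ ^ 2 + (p + 3) * d₀ := by
      rw [hxdef]
      linear_combination d₀ * hpm
    linarith [e4, hgoal]
  · -- action inequality
    have hD : (0:ℝ) < (d₀:ℝ) := by
      have : (2:ℝ) ≤ (d₀:ℝ) := by exact_mod_cast hd₀
      linarith
    have hq : ((2 * (d₀:ℝ) - 1) / (d₀:ℝ)) * (d₀:ℝ) = 2 * (d₀:ℝ) - 1 :=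
      div_mul_cancel₀ _ (ne_of_gt hD)
    rw [ha] at hpc
    have hmul := mul_lt_mul_of_pos_right hpc hD
    rw [hxdef, ha]
    push_cast
    nlinarith [hq, hmul, mul_pos hε hD]
  · -- trivial
    have : ((p + 2) * d₀ - 1) + d₀ = (p + 3) * d₀ - 1 := by ring
    omega
end

section
/- Let d₀ ≥ 2 be an integer, set a = (2·d₀ − 1)/d₀ and p = 4·d₀ − 3, and let c > 0 be real with 2·a + p − (d₀ − 1)/d₀² < p·c. Then, writing x = (p+2)·d₀ and y = d₀ − 1, there exists a finite set S of pairs of nonnegative integers such that: (a) S is downward closed, i.e. if (u,v) ∈ S and 0 ≤ u' ≤ u, 0 ≤ v' ≤ v then (u',v') ∈ S; (b) S is lattice-convex, i.e. every integer point of the convex hull of S in ℝ² lies in S; (c) (x,0) ∈ S, (0,y) ∈ S, and S ⊆ [0,x] × [0,y]; (d) 2·(|S| − 1) = 2·p·d₀² + (p+3)·d₀; and moreover (e) x + a·y ≤ p·c·d₀ and x + y ≥ (p+3)·d₀ − 1. -/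
/-- Limitation of the Hutchings criterion for `p = 4d₀ − 3`: with `a = (2d₀−1)/d₀` and
`2a + p − (d₀−1)/d₀² < pc`, there always exists the lattice-point set of a purely
elliptic convex generator `Λ` with `x(Λ) = (p+2)d₀`, `y(Λ) = d₀ − 1`,
`I(Λ) = I(e_{p,2}^{d₀})`, satisfying the action and genus inequalities of
`Λ ≤ e_{p,2}^{d₀}`. -/
theorem no_obstruction_smaller_p (d₀ : ℤ) (hd₀ : 2 ≤ d₀)
    (a : ℝ) (ha : a = (2 * d₀ - 1) / d₀) (p : ℤ) (hp : p = 4 * d₀ - 3)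
    (c : ℝ) (hc : 0 < c)
    (hpc : 2 * a + p - (d₀ - 1) / d₀ ^ 2 < p * c) :
    ∃ S : Finset (ℤ × ℤ),
      (∀ v ∈ S, 0 ≤ v.1 ∧ 0 ≤ v.2) ∧
      (∀ v ∈ S, ∀ w : ℤ × ℤ, 0 ≤ w.1 → w.1 ≤ v.1 → 0 ≤ w.2 → w.2 ≤ v.2 → w ∈ S) ∧
      (∀ w : ℤ × ℤ,
        ((w.1 : ℝ), (w.2 : ℝ)) ∈
          convexHull ℝ ((fun v : ℤ × ℤ => ((v.1 : ℝ), (v.2 : ℝ))) '' (S : Set (ℤ × ℤ))) →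
        w ∈ S) ∧
      (((p + 2) * d₀, 0) ∈ S ∧ (0, d₀ - 1) ∈ S ∧
        ∀ v ∈ S, v.1 ≤ (p + 2) * d₀ ∧ v.2 ≤ d₀ - 1) ∧
      2 * ((S.card : ℤ) - 1) = 2 * p * d₀ ^ 2 + (p + 3) * d₀ ∧
      (((p + 2) * d₀ : ℤ) : ℝ) + a * ((d₀ : ℝ) - 1) ≤ p * c * d₀ ∧
      (p + 2) * d₀ + (d₀ - 1) ≥ (p + 3) * d₀ - 1 := by
  subst ha hp
  set X : ℤ := (4 * d₀ - 3 + 2) * d₀ with hX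
  set C : ℤ := X + (d₀ - 1) * (d₀ - 2) with hC
  refine ⟨(Finset.Icc (0:ℤ) X ×ˢ Finset.Icc (0:ℤ) (d₀-1)).filter
      (fun v => v.1 + (d₀-1) * v.2 ≤ C), ?_, ?_, ?_, ?_, ?_, ?_, ?_⟩
  · intro v hv
    simp only [Finset.mem_filter, Finset.mem_product, Finset.mem_Icc] at hv
    exact ⟨hv.1.1.1, hv.1.2.1⟩
  · intro v hv w h1 h2 h3 h4
    simp only [Finset.mem_filter, Finset.mem_product, Finset.mem_Icc] at hv ⊢
    refine ⟨⟨⟨h1, le_trans h2 hv.1.1.2⟩, h3, le_trans h4 hv.1.2.2⟩, ?_⟩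
    have : (d₀-1) * w.2 ≤ (d₀-1) * v.2 := by nlinarith
    linarith [hv.2]
  · intro w hw
    -- convex hull constraints
    set T : Set (ℝ × ℝ) := {q | 0 ≤ q.1 ∧ q.1 ≤ (X:ℝ) ∧ 0 ≤ q.2 ∧ q.2 ≤ (d₀:ℝ) - 1 ∧
        q.1 + ((d₀:ℝ)-1) * q.2 ≤ (C:ℝ)} with hT
    have hconv : Convex ℝ T := by
      intro q hq r hr s t hs ht hst
      simp only [hT, Set.mem_setOf_eq, Prod.smul_fst, Prod.smul_snd, Prod.fst_add,
        Prod.snd_add, smul_eq_mul] at *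
      refine ⟨by nlinarith [hq.1, hr.1], by nlinarith [hq.2.1, hr.2.1],
        by nlinarith [hq.2.2.1, hr.2.2.1], by nlinarith [hq.2.2.2.1, hr.2.2.2.1],
        ?_⟩
      have e : s * (C:ℝ) + t * (C:ℝ) = (C:ℝ) := by rw [← add_mul, hst, one_mul]
      nlinarith [mul_le_mul_of_nonneg_left hq.2.2.2.2 hs,
        mul_le_mul_of_nonneg_left hr.2.2.2.2 ht, e]
    have hsub : (fun v : ℤ × ℤ => ((v.1 : ℝ), (v.2 : ℝ))) ''
        ((Finset.Icc (0:ℤ) X ×ˢ Finset.Icc (0:ℤ) (d₀-1)).filter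
          (fun v => v.1 + (d₀-1) * v.2 ≤ C) : Finset (ℤ×ℤ)) ⊆ T := by
      rintro _ ⟨v, hv, rfl⟩
      simp only [Finset.coe_filter, Set.mem_setOf_eq, Finset.mem_product,
        Finset.mem_Icc] at hv
      simp only [hT, Set.mem_setOf_eq]
      obtain ⟨⟨⟨h1, h2⟩, h3, h4⟩, h5⟩ := hv
      refine ⟨by exact_mod_cast h1, by exact_mod_cast h2, by exact_mod_cast h3,
        by push_cast; exact_mod_cast h4, by push_cast [← hC]; exact_mod_cast h5⟩
    have := convexHull_min hsub hconv hw
    simp only [hT, Set.mem_setOf_eq] at this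
    obtain ⟨h1, h2, h3, h4, h5⟩ := this
    simp only [Finset.mem_filter, Finset.mem_product, Finset.mem_Icc]
    refine ⟨⟨⟨by exact_mod_cast h1, by exact_mod_cast h2⟩,
      by exact_mod_cast h3, by exact_mod_cast (by push_cast at h4 ⊢; linarith : ((w.2:ℝ)) ≤ ((d₀ - 1 : ℤ) : ℝ))⟩, ?_⟩
    have : ((w.1 + (d₀-1) * w.2 : ℤ) : ℝ) ≤ ((C:ℤ):ℝ) := by push_cast; push_cast at h5; linarith
    exact_mod_cast this
  · refine ⟨?_, ?_, ?_⟩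
    · simp only [Finset.mem_filter, Finset.mem_product, Finset.mem_Icc]
      constructor
      · constructor
        · constructor <;> nlinarith
        · constructor <;> nlinarith
      · simp only [hC]; nlinarith
    · simp only [Finset.mem_filter, Finset.mem_product, Finset.mem_Icc]
      refine ⟨⟨⟨le_refl 0, by nlinarith⟩, by omega, le_refl _⟩, ?_⟩
      simp only [hC, hX]; nlinarith
    · intro v hv
      simp only [Finset.mem_filter, Finset.mem_product, Finset.mem_Icc] at hv
      exact ⟨hv.1.1.2, hv.1.2.2⟩
  · -- cardinality
    have hset : (Finset.Icc (0:ℤ) X ×ˢ Finset.Icc (0:ℤ) (d₀-1)).filter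
        (fun v => v.1 + (d₀-1) * v.2 ≤ C)
        = (Finset.Icc (0:ℤ) X ×ˢ Finset.Icc (0:ℤ) (d₀-2)) ∪
          (Finset.Icc (0:ℤ) (X-(d₀-1)) ×ˢ {d₀-1}) := by
      ext v
      simp only [Finset.mem_filter, Finset.mem_product, Finset.mem_Icc, Finset.mem_union,
        Finset.mem_singleton]
      constructor
      · rintro ⟨⟨⟨h1, h2⟩, h3, h4⟩, h5⟩
        rcases lt_or_eq_of_le h4 with h | h
        · exact Or.inl ⟨⟨h1, h2⟩, h3, by omega⟩
        · right
          refine ⟨⟨h1, ?_⟩, h⟩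
          rw [h] at h5
          simp only [hC] at h5
          nlinarith
      · rintro (⟨⟨h1, h2⟩, h3, h4⟩ | ⟨⟨h1, h2⟩, h3⟩)
        · refine ⟨⟨⟨h1, h2⟩, h3, by omega⟩, ?_⟩
          simp only [hC]
          nlinarith
        · refine ⟨⟨⟨h1, by omega⟩, by omega, by omega⟩, ?_⟩
          simp only [hC]
          nlinarith
    rw [hset, Finset.card_union_of_disjoint, Finset.card_product, Finset.card_product]
    · have hc1 : (Finset.Icc (0:ℤ) X).card = (X+1).toNat := by rw [Int.card_Icc]; ring_nf
      have hc2 : (Finset.Icc (0:ℤ) (d₀-2)).card = (d₀-1).toNat := by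
        rw [Int.card_Icc]; congr 1; ring
      have hc3 : (Finset.Icc (0:ℤ) (X-(d₀-1))).card = (X-d₀+2).toNat := by
        rw [Int.card_Icc]; congr 1; ring
      rw [hc1, hc2, hc3, Finset.card_singleton]
      have hX0 : 0 ≤ X + 1 := by nlinarith
      have hX1 : 0 ≤ X - d₀ + 2 := by nlinarith
      push_cast [Int.toNat_of_nonneg hX0, Int.toNat_of_nonneg (by omega : (0:ℤ) ≤ d₀ - 1),
        Int.toNat_of_nonneg hX1]
      simp only [hX]
      ring
    · rw [Finset.disjoint_left]
      rintro v hv hv'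
      simp only [Finset.mem_product, Finset.mem_Icc, Finset.mem_singleton] at hv hv'
      omega
  · -- action inequality
    have hd : (2:ℝ) ≤ (d₀:ℝ) := by exact_mod_cast hd₀
    have hd0 : (0:ℝ) < (d₀:ℝ) := by linarith
    have hd0' : (d₀:ℝ) ≠ 0 := ne_of_gt hd0
    simp only [hX]
    push_cast
    push_cast at hpc
    have key := mul_lt_mul_of_pos_right hpc hd0
    have heq : ((4*(d₀:ℝ)-3+2)*d₀) + (2*(d₀:ℝ)-1)/d₀*((d₀:ℝ)-1)
        = (2 * ((2 * (d₀:ℝ) - 1) / d₀) + (4 * (d₀:ℝ) - 3) - ((d₀:ℝ) - 1) / (d₀:ℝ) ^ 2) * d₀ := by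
      field_simp
      ring
    rw [heq]
    exact le_of_lt key
  · nlinarith [sq_nonneg d₀]
end
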